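/- Let x_i^{(j)} (i = 1,…,n; j = 1,…,m) be square-integrable random vectors in ℝ^d such that for each j the collection x_1^{(j)},…,x_n^{(j)} has E[x_i^{(j)}] = x̄_i and tr 𝕍[x_i^{(j)}] = σ_i², and such that for each i the replications over j are i.i.d. Let x_i^m = (1/m)Σ_{j=1}^m x_i^{(j)}, let B be a uniformly random size-b subset of {1,…,n} drawn without replacement with 1 < b < n, independent of all x_i^{(j)}, and let x_B^m = (1/b)Σ_{i∈B} x_i^m. Then tr 𝕍[x_B^m] ≤ ((n−b)/((n−1)mb))·(1/n)Σ_{i=1}^n σ_i² + (n(b−1)/((n−1)mb))·((1/n)Σ_{i=1}^n σ_i)² + ((n−b)/((n−1)b))·τ², where τ² = (1/n)Σ_{i=1}^n ‖x̄_i − x̄‖₂² and x̄ = (1/n)Σ_{i=1}^n x̄_i. -/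

import Mathlib

/-! Bound the variance of the minibatch mean by its second moment about the grand mean `x̄`.
Averaging over the uniformly drawn batch turns that moment into a quadratic form in the centred
estimates `x_i^m - x̄`, weighted by the inclusion probabilities `P(i ∈ B) = b/n` and
`P(i, k ∈ B) = b(b-1)/(n(n-1))`. Each entry splits as the covariance of `x_i^m` and `x_k^m` plus
`⟪x̄_i - x̄, x̄_k - x̄⟫`; independence over the `m` replications gives `tr 𝕍[x_i^m] = σ_i²/m`,
Cauchy–Schwarz bounds the covariances by `σ_i σ_k / m` (the case `ρ = 1`), and the mean terms
cancel in the full double sum because `∑ (x̄_i - x̄) = 0`. -/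

open MeasureTheory ProbabilityTheory
open scoped ENNReal

/-- `tr 𝕍[v] = E‖v − E v‖₂²` for a random vector `v`. -/
noncomputable def trVar {Ω : Type*} [MeasurableSpace Ω] (μ : Measure Ω)
    {E : Type*} [NormedAddCommGroup E] [NormedSpace ℝ E] [CompleteSpace E]
    (v : Ω → E) : ℝ :=
  ∫ ω, ‖v ω - ∫ ω', v ω' ∂μ‖ ^ 2 ∂μ

/-- `tr Cov(u, v) = E⟨u − E u, v − E v⟩` for random vectors `u, v`. -/
noncomputable def trCov {Ω : Type*} [MeasurableSpace Ω] (μ : Measure Ω)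
    {E : Type*} [NormedAddCommGroup E] [InnerProductSpace ℝ E] [CompleteSpace E]
    (u v : Ω → E) : ℝ :=
  ∫ ω, @inner ℝ _ _ (u ω - ∫ ω', u ω' ∂μ) (v ω - ∫ ω', v ω' ∂μ) ∂μ

/-- Bregman divergence `D_φ(x, y)`. -/
noncomputable def breg {E : Type*} [NormedAddCommGroup E] [InnerProductSpace ℝ E]
    [CompleteSpace E] (φ : E → ℝ) (x y : E) : ℝ :=
  φ x - φ y - @inner ℝ _ _ (gradient φ y) (x - y)

open Finset
open scoped RealInnerProductSpace

section TraceVariance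

variable {Ω : Type*} [MeasurableSpace Ω] {μ : Measure Ω}
  {E : Type*} [NormedAddCommGroup E] [InnerProductSpace ℝ E]

lemma MeasureTheory.MemLp.integral_inner_eq_inner_toLp {f g : Ω → E} (hf : MemLp f 2 μ)
    (hg : MemLp g 2 μ) :
    ∫ ω, ⟪f ω, g ω⟫ ∂μ = ⟪hf.toLp f, hg.toLp g⟫ := by
  rw [L2.inner_def]
  refine integral_congr_ae ?_
  filter_upwards [hf.coeFn_toLp, hg.coeFn_toLp] with ω hfω hgω
  rw [hfω, hgω]

lemma MeasureTheory.MemLp.integrable_inner {f g : Ω → E} (hf : MemLp f 2 μ) (hg : MemLp g 2 μ) :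
    Integrable (fun ω => ⟪f ω, g ω⟫) μ :=
  (L2.integrable_inner (hf.toLp f) (hg.toLp g)).congr <| by
    filter_upwards [hf.coeFn_toLp, hg.coeFn_toLp] with ω hfω hgω
    rw [hfω, hgω]

lemma integral_inner_le_sqrt_mul_sqrt {f g : Ω → E} (hf : MemLp f 2 μ) (hg : MemLp g 2 μ) :
    ∫ ω, ⟪f ω, g ω⟫ ∂μ ≤ √(∫ ω, ‖f ω‖ ^ 2 ∂μ) * √(∫ ω, ‖g ω‖ ^ 2 ∂μ) := by
  have hnorm {h : Ω → E} (hh : MemLp h 2 μ) : √(∫ ω, ‖h ω‖ ^ 2 ∂μ) = ‖hh.toLp h‖ := by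
    simp_rw [← real_inner_self_eq_norm_sq]
    rw [hh.integral_inner_eq_inner_toLp hh, real_inner_self_eq_norm_sq,
      Real.sqrt_sq (norm_nonneg _)]
  rw [hf.integral_inner_eq_inner_toLp hg, hnorm hf, hnorm hg]
  exact real_inner_le_norm _ _

lemma integral_norm_sum_sq {ι : Type*} (s : Finset ι) {f : ι → Ω → E}
    (hf : ∀ i ∈ s, MemLp (f i) 2 μ) :
    ∫ ω, ‖∑ i ∈ s, f i ω‖ ^ 2 ∂μ = ∑ i ∈ s, ∑ k ∈ s, ∫ ω, ⟪f i ω, f k ω⟫ ∂μ := by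
  have hint : ∀ i ∈ s, ∀ k ∈ s, Integrable (fun ω => ⟪f i ω, f k ω⟫) μ :=
    fun i hi k hk => (hf i hi).integrable_inner (hf k hk)
  simp_rw [← real_inner_self_eq_norm_sq, sum_inner, inner_sum]
  rw [integral_finsetSum _ fun i hi => integrable_finsetSum _ (hint i hi)]
  exact sum_congr rfl fun i hi => integral_finsetSum _ (hint i hi)

lemma trCov_self [CompleteSpace E] (v : Ω → E) : trCov μ v v = trVar μ v := by
  simp only [trCov, trVar, real_inner_self_eq_norm_sq]

lemma trVar_const_smul [CompleteSpace E] (c : ℝ) (v : Ω → E) :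
    trVar μ (fun ω => c • v ω) = c ^ 2 * trVar μ v := by
  simp only [trVar, integral_smul, ← smul_sub, norm_smul, mul_pow, Real.norm_eq_abs, sq_abs,
    integral_const_mul]

lemma trCov_le_sqrt_mul_sqrt [CompleteSpace E] [IsFiniteMeasure μ] {u v : Ω → E}
    (hu : MemLp u 2 μ) (hv : MemLp v 2 μ) :
    trCov μ u v ≤ √(trVar μ u) * √(trVar μ v) :=
  integral_inner_le_sqrt_mul_sqrt (hu.sub (memLp_const _)) (hv.sub (memLp_const _))

lemma trVar_sum_eq_sum_trCov [CompleteSpace E] [IsFiniteMeasure μ] {ι : Type*} (s : Finset ι)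
    {f : ι → Ω → E} (hf : ∀ i ∈ s, MemLp (f i) 2 μ) :
    trVar μ (fun ω => ∑ i ∈ s, f i ω) = ∑ i ∈ s, ∑ k ∈ s, trCov μ (f i) (f k) := by
  have hcenter (ω : Ω) : ∑ i ∈ s, f i ω - ∫ ω', ∑ i ∈ s, f i ω' ∂μ
      = ∑ i ∈ s, (f i ω - ∫ ω', f i ω' ∂μ) := by
    rw [integral_finsetSum _ fun i hi => (hf i hi).integrable one_le_two, sum_sub_distrib]
  simp only [trVar, hcenter]
  exact integral_norm_sum_sq s fun i hi => (hf i hi).sub (memLp_const _)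

lemma integral_inner_sub_sub [CompleteSpace E] [IsProbabilityMeasure μ] {u v : Ω → E}
    (hu : MemLp u 2 μ) (hv : MemLp v 2 μ) (a c : E) :
    ∫ ω, ⟪u ω - a, v ω - c⟫ ∂μ = trCov μ u v + ⟪∫ ω, u ω ∂μ - a, ∫ ω, v ω ∂μ - c⟫ := by
  set u₀ := fun ω => u ω - ∫ ω', u ω' ∂μ
  set v₀ := fun ω => v ω - ∫ ω', v ω' ∂μ
  have hu₀ : MemLp u₀ 2 μ := hu.sub (memLp_const _)
  have hv₀ : MemLp v₀ 2 μ := hv.sub (memLp_const _)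
  have hmean {w : Ω → E} (hw : MemLp w 2 μ) : ∫ ω, (w ω - ∫ ω', w ω' ∂μ) ∂μ = 0 := by
    rw [integral_sub (hw.integrable one_le_two) (integrable_const _), integral_const]
    simp
  have hexpand (ω : Ω) : ⟪u ω - a, v ω - c⟫ = ⟪u₀ ω, v₀ ω⟫ + ⟪∫ ω', v ω' ∂μ - c, u₀ ω⟫
      + ⟪∫ ω', u ω' ∂μ - a, v₀ ω⟫ + ⟪∫ ω', u ω' ∂μ - a, ∫ ω', v ω' ∂μ - c⟫ := by
    rw [show u ω - a = u₀ ω + (∫ ω', u ω' ∂μ - a) by simp [u₀],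
      show v ω - c = v₀ ω + (∫ ω', v ω' ∂μ - c) by simp [v₀], inner_add_left, inner_add_right,
      inner_add_right, real_inner_comm (u₀ ω)]
    ring
  have hu₀int := hu₀.integrable one_le_two
  have hv₀int := hv₀.integrable one_le_two
  simp_rw [hexpand]
  rw [integral_add ((hu₀.integrable_inner hv₀).fun_add (hu₀int.const_inner _) |>.fun_add
      (hv₀int.const_inner _)) (integrable_const _),
    integral_add ((hu₀.integrable_inner hv₀).fun_add (hu₀int.const_inner _)) (hv₀int.const_inner _),
    integral_add (hu₀.integrable_inner hv₀) (hu₀int.const_inner _),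
    integral_inner hu₀int, integral_inner hv₀int, integral_const]
  simp [trCov, u₀, v₀, hmean hu, hmean hv]

lemma integral_norm_sub_sq [CompleteSpace E] [IsProbabilityMeasure μ] {v : Ω → E}
    (hv : MemLp v 2 μ) (a : E) :
    ∫ ω, ‖v ω - a‖ ^ 2 ∂μ = trVar μ v + ‖∫ ω, v ω ∂μ - a‖ ^ 2 := by
  simpa only [real_inner_self_eq_norm_sq, trCov_self] using integral_inner_sub_sub hv hv a a

lemma trVar_le_integral_norm_sub_sq [CompleteSpace E] [IsProbabilityMeasure μ] {v : Ω → E}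
    (hv : MemLp v 2 μ) (a : E) : trVar μ v ≤ ∫ ω, ‖v ω - a‖ ^ 2 ∂μ := by
  rw [integral_norm_sub_sq hv a]
  exact le_add_of_nonneg_right (sq_nonneg _)

variable [FiniteDimensional ℝ E] [MeasurableSpace E] [BorelSpace E]

/-- Expand the inner product in an orthonormal basis and apply `IndepFun.covariance_eq_zero`
coordinatewise. -/
lemma ProbabilityTheory.IndepFun.trCov_eq_zero [IsFiniteMeasure μ] {f g : Ω → E}
    (h : IndepFun f g μ) (hf : MemLp f 2 μ) (hg : MemLp g 2 μ) : trCov μ f g = 0 := by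
  let e := stdOrthonormalBasis ℝ E
  have hexpand (ω : Ω) : ⟪f ω - ∫ ω', f ω' ∂μ, g ω - ∫ ω', g ω' ∂μ⟫
      = ∑ t, (⟪e t, f ω⟫ - ∫ ω', ⟪e t, f ω'⟫ ∂μ) * (⟪e t, g ω⟫ - ∫ ω', ⟪e t, g ω'⟫ ∂μ) := by
    rw [← e.sum_inner_mul_inner]
    simp only [integral_inner (hf.integrable one_le_two), integral_inner (hg.integrable one_le_two),
      ← inner_sub_right, real_inner_comm (e _)]
  have hcov (t) : cov[fun ω => ⟪e t, f ω⟫, fun ω => ⟪e t, g ω⟫; μ] = 0 :=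
    (h.comp (by fun_prop) (by fun_prop)).covariance_eq_zero (hf.const_inner _) (hg.const_inner _)
  simp only [trCov, hexpand]
  rw [integral_finsetSum _ fun t _ => ((hf.const_inner _).sub (memLp_const _)).integrable_mul
    ((hg.const_inner _).sub (memLp_const _))]
  exact sum_eq_zero fun t _ => hcov t

lemma ProbabilityTheory.IndepFun.trVar_sum [IsFiniteMeasure μ] {ι : Type*} {s : Finset ι}
    {f : ι → Ω → E} (hf : ∀ i ∈ s, MemLp (f i) 2 μ)
    (h : Set.Pairwise s fun i k => IndepFun (f i) (f k) μ) :
    trVar μ (fun ω => ∑ i ∈ s, f i ω) = ∑ i ∈ s, trVar μ (f i) := by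
  rw [trVar_sum_eq_sum_trCov s hf]
  refine sum_congr rfl fun i hi => ?_
  rw [sum_eq_single_of_mem i hi fun k hk hki =>
    (h hi hk hki.symm).trCov_eq_zero (hf i hi) (hf k hk), trCov_self]

lemma ProbabilityTheory.IndepFun.trVar_average [IsFiniteMeasure μ] {ι : Type*} [Fintype ι]
    {f : ι → Ω → E} (hf : ∀ i, MemLp (f i) 2 μ) (h : Pairwise fun i k => IndepFun (f i) (f k) μ)
    {v : ℝ} (hv : ∀ i, trVar μ (f i) = v) :
    trVar μ (fun ω => (Fintype.card ι : ℝ)⁻¹ • ∑ i, f i ω) = v / Fintype.card ι := by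
  rw [trVar_const_smul, IndepFun.trVar_sum (fun i _ => hf i) fun i _ k _ hik => h hik]
  simp only [hv, sum_const, card_univ, nsmul_eq_mul]
  rcases eq_or_ne (Fintype.card ι : ℝ) 0 with hι | hι
  · simp [hι]
  · field_simp

end TraceVariance

section SamplingWithoutReplacement

variable {α : Type*} [Fintype α] [DecidableEq α]

lemma sum_powersetCard_sum_sum {M : Type*} [AddCommMonoid M] (b : ℕ) (a : α → α → M) :
    ∑ S ∈ (univ : Finset α).powersetCard b, ∑ i ∈ S, ∑ k ∈ S, a i k
      = ∑ i, ∑ k, #{S ∈ (univ : Finset α).powersetCard b | i ∈ S ∧ k ∈ S} • a i k := by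
  rw [sum_comm' (t' := univ) (s' := fun i => {S ∈ (univ : Finset α).powersetCard b | i ∈ S})
    (by simp)]
  refine sum_congr rfl fun i _ => ?_
  rw [sum_comm' (t' := univ)
    (s' := fun k => {S ∈ (univ : Finset α).powersetCard b | i ∈ S ∧ k ∈ S}) (by simp; tauto)]
  simp

lemma card_filter_powersetCard_mem_mem_div_choose {b : ℕ} (hb : 2 ≤ b)
    (hbN : b ≤ Fintype.card α) (i k : α) :
    (#{S ∈ (univ : Finset α).powersetCard b | i ∈ S ∧ k ∈ S} : ℝ) / (Fintype.card α).choose b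
      = (b : ℝ) * (b - 1) / (Fintype.card α * (Fintype.card α - 1))
        + if i = k then (b : ℝ) * (Fintype.card α - b) / (Fintype.card α * (Fintype.card α - 1))
          else 0 := by
  have hpair : {S ∈ (univ : Finset α).powersetCard b | i ∈ S ∧ k ∈ S}
      = {S ∈ (univ : Finset α).powersetCard b | {i, k} ⊆ S} :=
    filter_congr fun S _ => by simp [insert_subset_iff]
  rw [hpair, card_filter_powersetCard_subset _ _ _ (subset_univ _)
    (card_le_two.trans hb), card_univ]
  set N := Fintype.card α
  have hN : (2 : ℝ) ≤ N := by exact_mod_cast hb.trans hbN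
  have hN0 : (N : ℝ) ≠ 0 := by positivity
  have hN1 : (N : ℝ) - 1 ≠ 0 := by linarith
  have hchoose : (0 : ℝ) < N.choose b := by exact_mod_cast Nat.choose_pos hbN
  by_cases hik : i = k
  · subst hik
    have h := Nat.choose_mul (n := N) (s := 1) (by omega : 1 ≤ b)
    simp only [Nat.choose_one_right] at h
    have h' : (N.choose b : ℝ) * b = N * ((N - 1).choose (b - 1) : ℕ) := by exact_mod_cast h
    simp only [insert_eq_of_mem (mem_singleton_self i), card_singleton, if_true]
    rw [show (b : ℝ) * (b - 1) / (N * (N - 1)) + b * (N - b) / (N * (N - 1)) = b / N by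
      field_simp; ring]
    field_simp
    linarith
  · have h := Nat.choose_mul (n := N) (s := 2) hb
    have h' : (N.choose b : ℝ) * (b * (b - 1) / 2)
        = N * (N - 1) / 2 * ((N - 2).choose (b - 2) : ℕ) := by
      rw [← Nat.cast_choose_two, ← Nat.cast_choose_two]
      exact_mod_cast h
    rw [card_pair hik, if_neg hik, add_zero]
    field_simp
    linarith

lemma choose_inv_mul_sum_powersetCard_sum_sum {b : ℕ} (hb : 2 ≤ b) (hbN : b ≤ Fintype.card α)
    (a : α → α → ℝ) :
    ((Fintype.card α).choose b : ℝ)⁻¹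
        * ∑ S ∈ (univ : Finset α).powersetCard b, ∑ i ∈ S, ∑ k ∈ S, a i k
      = (b : ℝ) * (b - 1) / (Fintype.card α * (Fintype.card α - 1)) * ∑ i, ∑ k, a i k
        + (b : ℝ) * (Fintype.card α - b) / (Fintype.card α * (Fintype.card α - 1))
          * ∑ i, a i i := by
  simp_rw [sum_powersetCard_sum_sum, mul_sum, nsmul_eq_mul, ← mul_assoc, inv_mul_eq_div,
    card_filter_powersetCard_mem_mem_div_choose hb hbN, add_mul, ite_mul, zero_mul,
    sum_add_distrib, sum_ite_eq]
  simp

end SamplingWithoutReplacement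

lemma apply_eq_sum_indicator_preimage_singleton_smul {X α E : Type*} [Fintype α] [AddCommMonoid E]
    [Module ℝ E] (K : X → α) (v : α → E) (x : X) :
    v (K x) = ∑ a, (K ⁻¹' {a}).indicator (1 : X → ℝ) x • v a := by
  classical
  simp [Set.indicator_apply, ite_smul, eq_comm]

section FiniteRandomIndex

variable {Ω Ω' α : Type*} [MeasurableSpace Ω] [MeasurableSpace Ω'] {μ : Measure Ω}
  {ν : Measure Ω'} [Fintype α]

lemma nullMeasurableSet_of_measure_add_measure_compl_le [IsFiniteMeasure μ] {s : Set Ω}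
    (h : μ s + μ sᶜ ≤ μ Set.univ) : NullMeasurableSet s μ := by
  set t := toMeasurable μ s
  have ht : MeasurableSet t := measurableSet_toMeasurable μ s
  have hst : s ⊆ t := subset_toMeasurable μ s
  have hcompl : μ (t \ s) + μ tᶜ = μ sᶜ := by
    rw [← measure_inter_add_sdiff sᶜ ht, Set.sdiff_eq, Set.inter_comm,
      Set.sdiff_eq, Set.inter_eq_right.2 (Set.compl_subset_compl.2 hst)]
  have hnull : μ (t \ s) = 0 := by
    have hle : μ s + μ tᶜ + μ (t \ s) ≤ μ s + μ tᶜ + 0 := by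
      rw [add_zero, add_right_comm, add_assoc, hcompl]
      calc μ s + μ sᶜ ≤ μ Set.univ := h
        _ = μ s + μ tᶜ := by rw [← measure_add_measure_compl ht, measure_toMeasurable]
    exact nonpos_iff_eq_zero.1 ((ENNReal.add_le_add_iff_left (by finiteness)).1 hle)
  exact ht.nullMeasurableSet.congr (ae_eq_set.2 ⟨hnull, by simp [Set.sdiff_eq_empty.2 hst]⟩)

lemma nullMeasurableSet_preimage_singleton_of_sum_le [IsFiniteMeasure μ] {K : Ω → α}
    (h : ∑ a, μ (K ⁻¹' {a}) ≤ μ Set.univ) (a : α) : NullMeasurableSet (K ⁻¹' {a}) μ := by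
  classical
  refine nullMeasurableSet_of_measure_add_measure_compl_le (le_trans ?_ h)
  rw [← add_sum_erase _ _ (mem_univ a)]
  gcongr
  have hcompl : (K ⁻¹' {a})ᶜ = ⋃ a' ∈ univ.erase a, K ⁻¹' {a'} := by
    ext ω
    simp [eq_comm]
  rw [hcompl]
  exact measure_biUnion_finset_le _ _

variable [IsFiniteMeasure μ] [SFinite ν] {K : Ω → α}

lemma memLp_prod_of_finite_index (hK : ∀ a, NullMeasurableSet (K ⁻¹' {a}) μ) {E : Type*}
    [NormedAddCommGroup E] [NormedSpace ℝ E] {p : ℝ≥0∞} {F : α → Ω' → E}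
    (hF : ∀ a, MemLp (F a) p ν) :
    MemLp (fun q : Ω × Ω' => F (K q.1) q.2) p (μ.prod ν) := by
  rw [show (fun q : Ω × Ω' => F (K q.1) q.2) = fun q => ∑ a, (K ⁻¹' {a}).indicator 1 q.1 • F a q.2
    from funext fun q => apply_eq_sum_indicator_preimage_singleton_smul K (F · q.2) q.1]
  refine memLp_finsetSum _ fun a _ => ?_
  have hind : MemLp (fun q : Ω × Ω' => (K ⁻¹' {a}).indicator (1 : Ω → ℝ) q.1) ∞ (μ.prod ν) :=
    memLp_top_of_bound (aestronglyMeasurable_const.indicator₀ (hK a)).comp_fst 1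
      (ae_of_all _ fun q => norm_indicator_le_norm_self (1 : Ω → ℝ) q.1 |>.trans (by simp))
  exact ((hF a).comp_snd μ).smul hind

lemma integral_prod_eq_sum_of_finite_index (hK : ∀ a, NullMeasurableSet (K ⁻¹' {a}) μ)
    {F : α → Ω' → ℝ} (hF : ∀ a, Integrable (F a) ν) :
    ∫ q : Ω × Ω', F (K q.1) q.2 ∂(μ.prod ν) = ∑ a, μ.real (K ⁻¹' {a}) * ∫ ω, F a ω ∂ν := by
  rw [show (fun q : Ω × Ω' => F (K q.1) q.2) = fun q => ∑ a, (K ⁻¹' {a}).indicator 1 q.1 * F a q.2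
    from funext fun q => apply_eq_sum_indicator_preimage_singleton_smul K (F · q.2) q.1,
    integral_finsetSum _ fun a _ => (Integrable.indicator₀ (f := (1 : Ω → ℝ))
    (integrable_const 1) (hK a)).mul_prod (hF a)]
  refine sum_congr rfl fun a _ => ?_
  rw [integral_prod_mul, integral_indicator₀ (hK a), Pi.one_def, setIntegral_const, smul_eq_mul,
    mul_one]

end FiniteRandomIndex

section Minibatch

variable {Ω ΩB α E : Type*} [MeasurableSpace Ω] [MeasurableSpace ΩB] [Fintype α]
  [NormedAddCommGroup E] [InnerProductSpace ℝ E] [CompleteSpace E]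

lemma trVar_minibatch_mean_le_sum_integral_inner (μ : Measure Ω) [IsProbabilityMeasure μ]
    (μB : Measure ΩB) [IsProbabilityMeasure μB] {b : ℕ} (hb : 2 ≤ b) (hbN : b ≤ Fintype.card α)
    (B : ΩB → Finset α)
    (hB : ∀ S, μB (B ⁻¹' {S}) = if #S = b then ((Fintype.card α).choose b : ℝ≥0∞)⁻¹ else 0)
    {y : α → Ω → E} (hy : ∀ i, MemLp (y i) 2 μ) (c : E) :
    trVar (μB.prod μ) (fun q : ΩB × Ω => (b : ℝ)⁻¹ • ∑ i ∈ B q.1, y i q.2)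
      ≤ ((b : ℝ)⁻¹) ^ 2 *
        ((b : ℝ) * (b - 1) / (Fintype.card α * (Fintype.card α - 1))
            * ∑ i, ∑ k, ∫ ω, ⟪y i ω - c, y k ω - c⟫ ∂μ
          + (b : ℝ) * (Fintype.card α - b) / (Fintype.card α * (Fintype.card α - 1))
            * ∑ i, ∫ ω, ⟪y i ω - c, y i ω - c⟫ ∂μ) := by
  classical
  set N := Fintype.card α
  set est : Finset α → Ω → E := fun S ω => (b : ℝ)⁻¹ • ∑ i ∈ S, y i ω
  have hchoose : (N.choose b : ℝ≥0∞) ≠ 0 := by exact_mod_cast (Nat.choose_pos hbN).ne'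
  have hsizes : ({S | #S = b} : Finset (Finset α)) = (univ : Finset α).powersetCard b := by
    ext S
    simp
  -- `B` need not be measurable: its fibres are null-measurable since their outer measures add up
  -- to `1`.
  have hfib : ∀ S, NullMeasurableSet (B ⁻¹' {S}) μB := by
    refine nullMeasurableSet_preimage_singleton_of_sum_le (le_of_eq ?_)
    rw [measure_univ]
    simp_rw [hB]
    rw [← sum_filter, hsizes, sum_const, card_powersetCard, card_univ, nsmul_eq_mul,
      ENNReal.mul_inv_cancel hchoose (ENNReal.natCast_ne_top _)]
  have hest : ∀ S, MemLp (est S) 2 μ := fun S => (memLp_finsetSum _ fun i _ => hy i).const_smul _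
  have hsq : ∀ S, Integrable (fun ω => ‖est S ω - c‖ ^ 2) μ :=
    fun S => ((hest S).sub (memLp_const c)).integrable_norm_pow two_ne_zero
  have hweight (S : Finset α) :
      μB.real (B ⁻¹' {S}) = if #S = b then ((N.choose b : ℕ) : ℝ)⁻¹ else 0 := by
    rw [measureReal_def, hB]
    split_ifs <;> simp
  have hbatch : ∀ S ∈ (univ : Finset α).powersetCard b, ∫ ω, ‖est S ω - c‖ ^ 2 ∂μ
      = ((b : ℝ)⁻¹) ^ 2 * ∑ i ∈ S, ∑ k ∈ S, ∫ ω, ⟪y i ω - c, y k ω - c⟫ ∂μ := by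
    intro S hS
    have hb0 : (b : ℝ) ≠ 0 := by positivity
    have hcenter (ω : Ω) : est S ω - c = (b : ℝ)⁻¹ • ∑ i ∈ S, (y i ω - c) := by
      rw [sum_sub_distrib, sum_const, mem_powersetCard_univ.1 hS, smul_sub,
        ← Nat.cast_smul_eq_nsmul ℝ, smul_smul, inv_mul_cancel₀ hb0, one_smul]
    simp_rw [hcenter, norm_smul, mul_pow, norm_inv, Real.norm_natCast]
    rw [integral_const_mul, integral_norm_sum_sq S (f := fun i ω => y i ω - c)
      fun i _ => (hy i).sub (memLp_const c)]
  calc trVar (μB.prod μ) (fun q : ΩB × Ω => est (B q.1) q.2)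
      ≤ ∫ q : ΩB × Ω, ‖est (B q.1) q.2 - c‖ ^ 2 ∂(μB.prod μ) :=
        trVar_le_integral_norm_sub_sq (memLp_prod_of_finite_index hfib hest) c
    _ = ∑ S, μB.real (B ⁻¹' {S}) * ∫ ω, ‖est S ω - c‖ ^ 2 ∂μ :=
        integral_prod_eq_sum_of_finite_index hfib hsq
    _ = ((b : ℝ)⁻¹) ^ 2 * (((N.choose b : ℕ) : ℝ)⁻¹ * ∑ S ∈ (univ : Finset α).powersetCard b,
          ∑ i ∈ S, ∑ k ∈ S, ∫ ω, ⟪y i ω - c, y k ω - c⟫ ∂μ) := by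
        simp_rw [hweight, ite_mul, zero_mul]
        rw [← sum_filter, hsizes, ← mul_sum, sum_congr rfl hbatch, ← mul_sum]
        ring
    _ = _ := by rw [choose_inv_mul_sum_powersetCard_sum_sum hb hbN]

lemma trVar_minibatch_mean_le (μ : Measure Ω) [IsProbabilityMeasure μ] (μB : Measure ΩB)
    [IsProbabilityMeasure μB] {b : ℕ} (hb : 2 ≤ b) (hbN : b ≤ Fintype.card α)
    (B : ΩB → Finset α)
    (hB : ∀ S, μB (B ⁻¹' {S}) = if #S = b then ((Fintype.card α).choose b : ℝ≥0∞)⁻¹ else 0)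
    {y : α → Ω → E} (hy : ∀ i, MemLp (y i) 2 μ) {ybar : α → E}
    (hmean : ∀ i, ∫ ω, y i ω ∂μ = ybar i) {s : α → ℝ} (hs : ∀ i, 0 ≤ s i)
    (hvar : ∀ i, trVar μ (y i) ≤ s i ^ 2) :
    trVar (μB.prod μ) (fun q : ΩB × Ω => (b : ℝ)⁻¹ • ∑ i ∈ B q.1, y i q.2)
      ≤ ((Fintype.card α : ℝ) - b) / (((Fintype.card α : ℝ) - 1) * b)
          * ((Fintype.card α : ℝ)⁻¹ * ∑ i, s i ^ 2)
        + (Fintype.card α : ℝ) * ((b : ℝ) - 1) / (((Fintype.card α : ℝ) - 1) * b)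
          * ((Fintype.card α : ℝ)⁻¹ * ∑ i, s i) ^ 2
        + ((Fintype.card α : ℝ) - b) / (((Fintype.card α : ℝ) - 1) * b)
          * ((Fintype.card α : ℝ)⁻¹
            * ∑ i, ‖ybar i - (Fintype.card α : ℝ)⁻¹ • ∑ k, ybar k‖ ^ 2) := by
  set N := Fintype.card α
  set c := (N : ℝ)⁻¹ • ∑ k, ybar k
  have hN : (2 : ℝ) ≤ N := by exact_mod_cast hb.trans hbN
  have hb1 : (1 : ℝ) ≤ b := by exact_mod_cast one_le_two.trans hb
  have hbN' : (b : ℝ) ≤ N := by exact_mod_cast hbN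
  have hpairs_coeff : 0 ≤ (b : ℝ) * (b - 1) / (N * (N - 1)) :=
    div_nonneg (mul_nonneg (by positivity) (by linarith)) (mul_nonneg (by positivity) (by linarith))
  have hdiag_coeff : 0 ≤ (b : ℝ) * (N - b) / (N * (N - 1)) :=
    div_nonneg (mul_nonneg (by positivity) (by linarith)) (mul_nonneg (by positivity) (by linarith))
  have hcorr (i k : α) : ∫ ω, ⟪y i ω - c, y k ω - c⟫ ∂μ ≤ s i * s k + ⟪ybar i - c, ybar k - c⟫ := by
    rw [integral_inner_sub_sub (hy i) (hy k), hmean, hmean]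
    gcongr
    calc trCov μ (y i) (y k) ≤ √(trVar μ (y i)) * √(trVar μ (y k)) :=
          trCov_le_sqrt_mul_sqrt (hy i) (hy k)
      _ ≤ √(s i ^ 2) * √(s k ^ 2) := by gcongr <;> exact hvar _
      _ = s i * s k := by rw [Real.sqrt_sq (hs i), Real.sqrt_sq (hs k)]
  have hdiag (i : α) : ∫ ω, ⟪y i ω - c, y i ω - c⟫ ∂μ ≤ s i ^ 2 + ‖ybar i - c‖ ^ 2 := by
    rw [integral_inner_sub_sub (hy i) (hy i), trCov_self, hmean, real_inner_self_eq_norm_sq]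
    gcongr
    exact hvar i
  have hcentered : ∑ i, (ybar i - c) = 0 := by
    rw [sum_sub_distrib, sum_const, card_univ, ← Nat.cast_smul_eq_nsmul ℝ, smul_smul,
      mul_inv_cancel₀ (by positivity), one_smul, sub_self]
  have hpairs : ∑ i, ∑ k, (s i * s k + ⟪ybar i - c, ybar k - c⟫) = (∑ i, s i) ^ 2 := by
    simp only [sum_add_distrib, ← inner_sum, hcentered, inner_zero_right, add_zero, ← mul_sum,
      ← sum_mul, sq]
  calc _ ≤ ((b : ℝ)⁻¹) ^ 2 * ((b : ℝ) * (b - 1) / (N * (N - 1))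
            * ∑ i, ∑ k, ∫ ω, ⟪y i ω - c, y k ω - c⟫ ∂μ
          + (b : ℝ) * (N - b) / (N * (N - 1)) * ∑ i, ∫ ω, ⟪y i ω - c, y i ω - c⟫ ∂μ) :=
        trVar_minibatch_mean_le_sum_integral_inner μ μB hb hbN B hB hy c
    _ ≤ ((b : ℝ)⁻¹) ^ 2 * ((b : ℝ) * (b - 1) / (N * (N - 1))
            * ∑ i, ∑ k, (s i * s k + ⟪ybar i - c, ybar k - c⟫)
          + (b : ℝ) * (N - b) / (N * (N - 1)) * ∑ i, (s i ^ 2 + ‖ybar i - c‖ ^ 2)) := by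
        gcongr with i _ k _ i
        · exact hcorr i k
        · exact hdiag i
    _ = _ := by
        rw [hpairs, sum_add_distrib]
        field_simp
        ring

end Minibatch

theorem doubly_stochastic_variance_without_replacement_correlated_general
    {d n m : ℕ} (hm : 1 ≤ m) (b : ℕ) (hb1 : 1 < b) (hbn : b < n)
    {Ω ΩB : Type*} [MeasurableSpace Ω] [MeasurableSpace ΩB]
    (μ : Measure Ω) (μB : Measure ΩB) [IsProbabilityMeasure μ] [IsProbabilityMeasure μB]
    (x : Fin n → Fin m → Ω → EuclideanSpace ℝ (Fin d))
    (hmem : ∀ i j, MemLp (x i j) 2 μ)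
    (xbar : Fin n → EuclideanSpace ℝ (Fin d))
    (hmean : ∀ i j, ∫ ω, x i j ω ∂μ = xbar i)
    (σ : Fin n → ℝ) (hσ : ∀ i, 0 ≤ σ i)
    (hvar : ∀ i j, trVar μ (x i j) = σ i ^ 2)
    -- for each `i`, the replications over `j` are i.i.d.
    (hiid : ∀ i, iIndepFun (fun j : Fin m => x i j) μ)
    -- `B` is a uniformly random size-`b` subset of `{1, …, n}`, independent of the `x i j`
    (B : ΩB → Finset (Fin n))
    (hB : ∀ S : Finset (Fin n),
      μB (B ⁻¹' {S}) = if S.card = b then ((n.choose b : ℝ≥0∞))⁻¹ else 0) :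
    trVar (μB.prod μ)
        (fun p : ΩB × Ω => (b : ℝ)⁻¹ • ∑ i ∈ B p.1, (m : ℝ)⁻¹ • ∑ j, x i j p.2)
      ≤ ((n : ℝ) - b) / (((n : ℝ) - 1) * m * b) * ((n : ℝ)⁻¹ * ∑ i, σ i ^ 2)
        + (n : ℝ) * ((b : ℝ) - 1) / (((n : ℝ) - 1) * m * b)
            * ((n : ℝ)⁻¹ * ∑ i, σ i) ^ 2
        + ((n : ℝ) - b) / (((n : ℝ) - 1) * b)
            * ((n : ℝ)⁻¹ * ∑ i, ‖xbar i - (n : ℝ)⁻¹ • ∑ k, xbar k‖ ^ 2) := by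
  have hm0 : (m : ℝ) ≠ 0 := Nat.cast_ne_zero.2 (by omega)
  set y : Fin n → Ω → EuclideanSpace ℝ (Fin d) := fun i ω => (m : ℝ)⁻¹ • ∑ j, x i j ω
  have hy (i : Fin n) : MemLp (y i) 2 μ :=
    (memLp_finsetSum univ fun j _ => hmem i j).const_smul ((m : ℝ)⁻¹)
  have hy_mean (i : Fin n) : ∫ ω, y i ω ∂μ = xbar i := by
    rw [integral_smul, integral_finsetSum _ fun j _ => (hmem i j).integrable one_le_two]
    simp only [hmean, sum_const, card_univ, Fintype.card_fin]
    rw [← Nat.cast_smul_eq_nsmul ℝ, smul_smul, inv_mul_cancel₀ hm0, one_smul]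
  have hy_var (i : Fin n) : trVar μ (y i) ≤ (σ i / √m) ^ 2 := by
    rw [div_pow, Real.sq_sqrt (Nat.cast_nonneg m)]
    simpa using (IndepFun.trVar_average (hmem i) (fun j k hjk => (hiid i).indepFun hjk)
      (hvar i)).le
  have hbound := trVar_minibatch_mean_le μ μB (b := b) (by omega) (by simpa using hbn.le) B
    (by simpa only [Fintype.card_fin] using hB) hy hy_mean
    (fun i => div_nonneg (hσ i) (Real.sqrt_nonneg _)) hy_var
  simp only [Fintype.card_fin, div_pow, mul_pow, Real.sq_sqrt (Nat.cast_nonneg m), ← sum_div]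
    at hbound
  refine hbound.trans_eq ?_
  have hn1 : (n : ℝ) - 1 ≠ 0 := sub_ne_zero.2 (by exact_mod_cast (hb1.trans hbn).ne')
  field_simp

/-- Variance of the doubly stochastic estimator built from `m`-sample Monte
Carlo averages `x_i^m` (worst-case correlation `ρ = 1`) combined with `b`-minibatch sampling
without replacement, for `1 < b < n`. -/
theorem doubly_stochastic_variance_without_replacement_correlated
    {d n m : ℕ} (hm : 1 ≤ m) (b : ℕ) (hb1 : 1 < b) (hbn : b < n)
    {Ω ΩB : Type*} [MeasurableSpace Ω] [MeasurableSpace ΩB]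
    (μ : Measure Ω) (μB : Measure ΩB) [IsProbabilityMeasure μ] [IsProbabilityMeasure μB]
    (x : Fin n → Fin m → Ω → EuclideanSpace ℝ (Fin d))
    (hmem : ∀ i j, MemLp (x i j) 2 μ)
    (xbar : Fin n → EuclideanSpace ℝ (Fin d))
    (hmean : ∀ i j, ∫ ω, x i j ω ∂μ = xbar i)
    (σ : Fin n → ℝ) (hσ : ∀ i, 0 ≤ σ i)
    (hvar : ∀ i j, trVar μ (x i j) = σ i ^ 2)
    -- for each `i`, the replications over `j` are i.i.d.
    (hiid : ∀ i, iIndepFun (fun j : Fin m => x i j) μ)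
    (hident : ∀ i, ∀ j j' : Fin m, IdentDistrib (x i j) (x i j') μ μ)
    -- `B` is a uniformly random size-`b` subset of `{1, …, n}`, independent of the `x i j`
    (B : ΩB → Finset (Fin n))
    (hB : ∀ S : Finset (Fin n),
      μB (B ⁻¹' {S}) = if S.card = b then ((n.choose b : ℝ≥0∞))⁻¹ else 0) :
    trVar (μB.prod μ)
        (fun p : ΩB × Ω => (b : ℝ)⁻¹ • ∑ i ∈ B p.1, (m : ℝ)⁻¹ • ∑ j, x i j p.2)
      ≤ ((n : ℝ) - b) / (((n : ℝ) - 1) * m * b) * ((n : ℝ)⁻¹ * ∑ i, σ i ^ 2)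
        + (n : ℝ) * ((b : ℝ) - 1) / (((n : ℝ) - 1) * m * b)
            * ((n : ℝ)⁻¹ * ∑ i, σ i) ^ 2
        + ((n : ℝ) - b) / (((n : ℝ) - 1) * b)
            * ((n : ℝ)⁻¹ * ∑ i, ‖xbar i - (n : ℝ)⁻¹ • ∑ k, xbar k‖ ^ 2) :=
  doubly_stochastic_variance_without_replacement_correlated_general hm b hb1 hbn μ μB x hmem xbar
    hmean σ hσ hvar hiid B hB
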